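/- NAC descent step with Fisher preconditioning: Let F be a d×d real symmetric matrix with λ_min I ⪯ F ⪯ C² I for λ_min > 0, let J : ℝ^d → ℝ be differentiable with L-Lipschitz gradient, and set θ̄* = F⁻¹ ∇J(ω). For the update ω' = ω + β θ with ‖θ‖ ≤ B and β > 0, we have J(ω') ≥ J(ω) + (β/(2C²))‖∇J(ω)‖² − C² β ‖θ − θ̄*‖² − (L B² β²)/2. -/

import Mathlib

/-!
With `g = ∇J(ω) = F θ̄`, the spectral bounds on the symmetric `F` give `⟪g, θ̄⟫ ≥ ‖g‖² / C²`,
and Young's inequality costs at most `‖g‖² / (4C²) + C² ‖θ - θ̄‖²` on `⟪g, θ - θ̄⟫`, so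
`⟪g, θ⟫ ≥ ‖g‖² / (2C²) - C² ‖θ - θ̄‖²`. The descent lemma for the `L`-smooth `J` turns this
first-order gain along `βθ` into an increase of `J`, up to the curvature loss `L ‖βθ‖² / 2`.
-/

open scoped RealInnerProductSpace

section LipschitzGradient

variable {E : Type*} [NormedAddCommGroup E] [InnerProductSpace ℝ E] [CompleteSpace E]
  {f : E → ℝ} {L : ℝ}

theorem Differentiable.hasDerivAt_apply_add_smul (hf : Differentiable ℝ f) (x v : E) (t : ℝ) :
    HasDerivAt (fun s : ℝ => f (x + s • v)) ⟪gradient f (x + t • v), v⟫ t := by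
  have hline : HasDerivAt (fun s : ℝ => x + s • v) v t := by
    simpa using ((hasDerivAt_id t).smul_const v).const_add x
  simpa [Function.comp_def] using (hf _).hasGradientAt.hasFDerivAt.comp_hasDerivAt t hline

theorem neg_mul_le_inner_gradient_add_smul_sub
    (hLip : ∀ x y, ‖gradient f x - gradient f y‖ ≤ L * ‖x - y‖) (x v : E) {t : ℝ} (ht : 0 ≤ t) :
    -(L * t * ‖v‖ ^ 2) ≤ ⟪gradient f (x + t • v) - gradient f x, v⟫ := by
  have hnorm : ‖gradient f (x + t • v) - gradient f x‖ ≤ L * t * ‖v‖ := by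
    simpa [norm_smul, abs_of_nonneg ht, mul_assoc] using hLip (x + t • v) x
  calc -(L * t * ‖v‖ ^ 2) = -(L * t * ‖v‖ * ‖v‖) := by ring
    _ ≤ -(‖gradient f (x + t • v) - gradient f x‖ * ‖v‖) := by gcongr
    _ ≤ _ := neg_le_of_abs_le (abs_real_inner_le_norm _ _)

theorem add_inner_gradient_sub_le_apply_add (hf : Differentiable ℝ f)
    (hLip : ∀ x y, ‖gradient f x - gradient f y‖ ≤ L * ‖x - y‖) (x v : E) :
    f x + ⟪gradient f x, v⟫ - L * ‖v‖ ^ 2 / 2 ≤ f (x + v) := by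
  -- `φ` has derivative `⟪∇f (x + t v) - ∇f x, v⟫ + L t ‖v‖² ≥ 0` for `t ≥ 0`.
  let φ : ℝ → ℝ := fun t => f (x + t • v) - t * ⟪gradient f x, v⟫ + L * ‖v‖ ^ 2 * t ^ 2 / 2
  have hφ (t : ℝ) :
      HasDerivAt φ (⟪gradient f (x + t • v), v⟫ - ⟪gradient f x, v⟫ + L * ‖v‖ ^ 2 * t) t := by
    have hlin : HasDerivAt (fun s : ℝ => s * ⟪gradient f x, v⟫) ⟪gradient f x, v⟫ t := by
      simpa using (hasDerivAt_id t).mul_const ⟪gradient f x, v⟫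
    have hsq : HasDerivAt (fun s : ℝ => L * ‖v‖ ^ 2 * s ^ 2 / 2) (L * ‖v‖ ^ 2 * t) t := by
      refine (((hasDerivAt_pow 2 t).const_mul (L * ‖v‖ ^ 2)).div_const 2).congr_deriv ?_
      norm_num
      ring
    exact ((hf.hasDerivAt_apply_add_smul x v t).sub hlin).add hsq
  have hmono : MonotoneOn φ (Set.Ici 0) := by
    refine monotoneOn_of_hasDerivWithinAt_nonneg (convex_Ici 0)
      (fun t _ => (hφ t).continuousAt.continuousWithinAt) (fun t _ => (hφ t).hasDerivWithinAt)
      fun t ht => ?_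
    rw [interior_Ici] at ht
    have := neg_mul_le_inner_gradient_add_smul_sub hLip x v ht.le
    rw [inner_sub_left] at this
    linarith
  have hφ0 : φ 0 = f x := by simp [φ]
  have hφ1 : φ 1 = f (x + v) - ⟪gradient f x, v⟫ + L * ‖v‖ ^ 2 / 2 := by simp [φ]
  linarith [hmono Set.self_mem_Ici (Set.mem_Ici.2 zero_le_one) zero_le_one]

end LipschitzGradient

section Preconditioner

variable {E : Type*} [NormedAddCommGroup E] [InnerProductSpace ℝ E] {T : E →ₗ[ℝ] E} {c : ℝ}

theorem LinearMap.IsSymmetric.norm_sq_div_le_inner_map_self (hT : T.IsSymmetric)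
    (hpos : ∀ x, 0 ≤ ⟪x, T x⟫) (hup : ∀ x, ⟪x, T x⟫ ≤ c * ‖x‖ ^ 2) (hc : 0 < c) (x : E) :
    ‖T x‖ ^ 2 / c ≤ ⟪x, T x⟫ := by
  -- Expand `0 ≤ ⟪y, T y⟫` at `y = x - c⁻¹ • T x`.
  have hexpand : ⟪x - c⁻¹ • T x, T (x - c⁻¹ • T x)⟫
      = ⟪x, T x⟫ - 2 * c⁻¹ * ‖T x‖ ^ 2 + c⁻¹ ^ 2 * ⟪T x, T (T x)⟫ := by
    simp only [map_sub, map_smul, inner_sub_left, inner_sub_right, real_inner_smul_left,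
      real_inner_smul_right, ← hT x (T x), real_inner_self_eq_norm_sq]
    ring
  have hquad : c⁻¹ ^ 2 * ⟪T x, T (T x)⟫ ≤ c⁻¹ * ‖T x‖ ^ 2 := by
    calc c⁻¹ ^ 2 * ⟪T x, T (T x)⟫ ≤ c⁻¹ ^ 2 * (c * ‖T x‖ ^ 2) := by gcongr; exact hup _
      _ = c⁻¹ * ‖T x‖ ^ 2 := by field_simp
  rw [div_eq_inv_mul]
  linarith [hpos (x - c⁻¹ • T x)]

theorem LinearMap.IsSymmetric.norm_sq_div_two_mul_sub_le_inner_map (hT : T.IsSymmetric) {m : ℝ}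
    (hm : 0 < m) (hlow : ∀ x, m * ‖x‖ ^ 2 ≤ ⟪x, T x⟫) (hup : ∀ x, ⟪x, T x⟫ ≤ c * ‖x‖ ^ 2)
    (θ θbar : E) : ‖T θbar‖ ^ 2 / (2 * c) - c * ‖θ - θbar‖ ^ 2 ≤ ⟪T θbar, θ⟫ := by
  have hpos (x : E) : 0 ≤ ⟪x, T x⟫ := (by positivity : 0 ≤ m * ‖x‖ ^ 2).trans (hlow x)
  set g := T θbar
  set u := θ - θbar
  rcases eq_or_ne g 0 with hg | hg
  · have hu : 0 ≤ c * ‖u‖ ^ 2 := (hpos u).trans (hup u)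
    simp [hg, hu]
  have hc : 0 < c := by
    have hg2 : 0 < ‖g‖ ^ 2 := by positivity
    nlinarith [(hlow g).trans (hup g)]
  have hkey : ‖g‖ ^ 2 / c ≤ ⟪g, θbar⟫ := by
    rw [real_inner_comm]; exact hT.norm_sq_div_le_inner_map_self hpos hup hc θbar
  have hyoung : -(‖g‖ ^ 2 / (4 * c) + c * ‖u‖ ^ 2) ≤ ⟪g, u⟫ := by
    have : ‖g‖ * ‖u‖ ≤ ‖g‖ ^ 2 / (4 * c) + c * ‖u‖ ^ 2 := by
      rw [div_add' _ _ _ (by positivity), le_div_iff₀ (by positivity)]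
      nlinarith [sq_nonneg (‖g‖ - 2 * c * ‖u‖)]
    linarith [neg_le_of_abs_le (abs_real_inner_le_norm g u)]
  have hsplit : ⟪g, θ⟫ = ⟪g, θbar⟫ + ⟪g, u⟫ := by
    rw [← inner_add_right, add_sub_cancel]
  have hhalf : ‖g‖ ^ 2 / (2 * c) = ‖g‖ ^ 2 / c - ‖g‖ ^ 2 / (4 * c) - ‖g‖ ^ 2 / (4 * c) := by
    field_simp; ring
  have : 0 ≤ ‖g‖ ^ 2 / (4 * c) := by positivity
  linarith

end Preconditioner

/-- NAC descent step with Fisher preconditioning: let F be a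
symmetric positive operator with λ_min I ⪯ F ⪯ C² I (λ_min > 0), J be
differentiable with L-Lipschitz gradient, and θ̄* = F⁻¹∇J(ω) (i.e. Fθ̄* = ∇J(ω)).
Then for ω' = ω + βθ with ‖θ‖ ≤ B and β > 0,
J(ω') ≥ J(ω) + (β/(2C²))‖∇J(ω)‖² − C²β‖θ − θ̄*‖² − LB²β²/2. -/
theorem nac_descent_step {d : ℕ}
    (F : EuclideanSpace ℝ (Fin d) →L[ℝ] EuclideanSpace ℝ (Fin d))
    (lmin C L B β : ℝ) (hlmin : 0 < lmin) (hL : 0 ≤ L)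
    (hsymm : ∀ x y, ⟪F x, y⟫ = ⟪x, F y⟫)
    (hlow : ∀ x, lmin * ‖x‖ ^ 2 ≤ ⟪x, F x⟫)
    (hup : ∀ x, ⟪x, F x⟫ ≤ C ^ 2 * ‖x‖ ^ 2)
    (J : EuclideanSpace ℝ (Fin d) → ℝ) (hJ : Differentiable ℝ J)
    (hLip : ∀ x y, ‖gradient J x - gradient J y‖ ≤ L * ‖x - y‖)
    (ω θ θbar : EuclideanSpace ℝ (Fin d))
    (hθbar : F θbar = gradient J ω) (hθ : ‖θ‖ ≤ B) (hβ : 0 < β) :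
    J (ω + β • θ) ≥ J ω + (β / (2 * C ^ 2)) * ‖gradient J ω‖ ^ 2
      - C ^ 2 * β * ‖θ - θbar‖ ^ 2 - L * B ^ 2 * β ^ 2 / 2 := by
  have hFsymm : (F : EuclideanSpace ℝ (Fin d) →ₗ[ℝ] EuclideanSpace ℝ (Fin d)).IsSymmetric := hsymm
  have hinner := hFsymm.norm_sq_div_two_mul_sub_le_inner_map hlmin hlow hup θ θbar
  simp only [ContinuousLinearMap.coe_coe, hθbar] at hinner
  have hdesc := add_inner_gradient_sub_le_apply_add hJ hLip ω (β • θ)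
  rw [norm_smul, real_inner_smul_right, Real.norm_eq_abs, abs_of_pos hβ] at hdesc
  have hstep : L * (β * ‖θ‖) ^ 2 / 2 ≤ L * (β * B) ^ 2 / 2 := by gcongr
  have hscaled := mul_le_mul_of_nonneg_left hinner hβ.le
  linear_combination hdesc + hstep + hscaled
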